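/- arXiv:1302.0298 — 2 statements merged into one kernel-verified Lean document; each statement's English description precedes it below -/
import Mathlib

section
/- For every prime number p > 5 there exist a positive integer e and natural numbers i, j with i < p^e − 1 and j < p^e − 1 such that, setting a₁ = ⌈(p^e−1)·(2/5)⌉, a₂ = ⌈(p^e−1)·(2/3)⌉, a₃ = ⌈(p^e−1)·(5/6)⌉, the coefficient of x^i y^j in the polynomial x^{a₁} · y^{a₂} · (x+y)^{a₃} of 𝔽_p[x,y] is nonzero. -/
/-!
Write `q = p ^ e - 1` and `a₁, a₂, a₃` for the three ceilings. For `k ≤ a₃` the coefficient of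
`x ^ (a₁ + k) * y ^ (a₂ + a₃ - k)` is `(a₃.choose k : 𝔽_p)`, which by Lucas's theorem is nonzero
as soon as every base-`p` digit of `k` is at most the corresponding digit of `a₃`; it remains to
keep both exponents below `q`. Since `2/5 + 2/3 + 5/6 = 19/10 < 2`, for `p ≥ 47` already `e = 1`
works with the `x`-exponent equal to `q - 1` (then `a₃ < p`, so the digit condition is just
`k ≤ a₃`). The primes `7 ≤ p ≤ 43` are settled by explicit witnesses, with `e = 2` for `p ≤ 29`.
-/

open MvPolynomial

theorem MvPolynomial.coeff_X_pow_mul_X_pow_mul_add_pow {R : Type*} [CommSemiring R]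
    (a b : ℕ) {c k : ℕ} (hk : k ≤ c) :
    coeff (Finsupp.single 0 (a + k) + Finsupp.single 1 (b + (c - k)))
      ((X 0 : MvPolynomial (Fin 2) R) ^ a * X 1 ^ b * (X 0 + X 1) ^ c) = (c.choose k : R) := by
  have hsplit : Finsupp.single (0 : Fin 2) (a + k) + Finsupp.single 1 (b + (c - k)) =
      (Finsupp.single 0 a + Finsupp.single 1 b) +
        (Finsupp.single 0 k + Finsupp.single 1 (c - k)) := by
    simp only [Finsupp.single_add]; abel
  rw [X_pow_eq_monomial, X_pow_eq_monomial, monomial_mul, one_mul, hsplit, coeff_monomial_mul,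
    one_mul, coeff_add_pow, if_pos] <;> simp [hk]

theorem Nat.ceil_natCast_mul_div_natCast {K : Type*} [Field K] [LinearOrder K]
    [IsStrictOrderedRing K] [FloorSemiring K] (m a : ℕ) {b : ℕ} (hb : 0 < b) :
    ⌈(m : K) * (a / b)⌉₊ = m * a ⌈/⌉ b := by
  refine eq_of_forall_ge_iff fun c => ?_
  rw [Nat.ceil_le, ceilDiv_le_iff_le_mul hb, ← mul_div_assoc, div_le_iff₀ (by positivity),
    mul_comm b]
  exact_mod_cast Iff.rfl

theorem Nat.Prime.not_dvd_choose_of_digits_le {p n k a : ℕ} (hp : p.Prime) (hn : n < p ^ a)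
    (hk : k ≤ n) (hdigits : ∀ i < a, k / p ^ i % p ≤ n / p ^ i % p) : ¬ p ∣ n.choose k := by
  have := Fact.mk hp
  rw [Nat.dvd_iff_mod_eq_zero, Choose.choose_modEq_prod_range_choose_nat hn (hk.trans_lt hn),
    ← Nat.dvd_iff_mod_eq_zero, hp.prime.dvd_finsetProd_iff]
  rintro ⟨i, hi, hdvd⟩
  exact (hp.coprime_iff_not_dvd.mp
    (hp.coprime_choose_of_lt (Nat.mod_lt _ hp.pos) (hdigits i (Finset.mem_range.mp hi)))) hdvd

/-- `k` picks the monomial `x ^ (a₁ + k) * y ^ (a₂ + a₃ - k)`, whose coefficient is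
`a₃.choose k`; the last conjunct is the digit condition of Lucas's theorem. -/
def IsFedderWitness (p e k : ℕ) : Prop :=
  let q := p ^ e - 1
  let a₁ := q * 2 ⌈/⌉ 5
  let a₂ := q * 2 ⌈/⌉ 3
  let a₃ := q * 5 ⌈/⌉ 6
  k ≤ a₃ ∧ a₁ + k < q ∧ a₂ + (a₃ - k) < q ∧ ∀ i < e, k / p ^ i % p ≤ a₃ / p ^ i % p

instance (p e k : ℕ) : Decidable (IsFedderWitness p e k) := by
  unfold IsFedderWitness; infer_instance

theorem isFedderWitness_one_of_le {p : ℕ} (hp : 47 ≤ p) :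
    IsFedderWitness p 1 (p - 2 - (p - 1) * 2 ⌈/⌉ 5) := by
  simp only [IsFedderWitness, pow_one, Nat.ceilDiv_eq_add_pred_div, Nat.lt_one_iff, forall_eq,
    pow_zero, Nat.div_one]
  have ha₃ : ((p - 1) * 5 + 6 - 1) / 6 < p := by omega
  rw [Nat.mod_eq_of_lt ha₃, Nat.mod_eq_of_lt (by omega)]
  omega

theorem exists_isFedderWitness_of_lt {p : ℕ} (hp : p.Prime) (h5 : 5 < p) (h47 : p < 47) :
    ∃ e, 0 < e ∧ ∃ k, IsFedderWitness p e k := by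
  interval_cases p
  all_goals try (norm_num at hp; done)
  exacts [⟨2, two_pos, 25, by decide⟩, ⟨2, two_pos, 66, by decide⟩, ⟨2, two_pos, 85, by decide⟩,
    ⟨2, two_pos, 153, by decide⟩, ⟨2, two_pos, 181, by decide⟩, ⟨2, two_pos, 276, by decide⟩,
    ⟨2, two_pos, 435, by decide⟩, ⟨1, one_pos, 16, by decide⟩, ⟨1, one_pos, 19, by decide⟩,
    ⟨1, one_pos, 22, by decide⟩, ⟨1, one_pos, 22, by decide⟩]

theorem exists_coeff_ne_zero_of_isFedderWitness {p e k : ℕ} (hp : p.Prime) (he : 0 < e)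
    (hk : IsFedderWitness p e k) :
    ∃ e : ℕ, 0 < e ∧ ∃ i j : ℕ, i < p ^ e - 1 ∧ j < p ^ e - 1 ∧
      MvPolynomial.coeff (Finsupp.single 0 i + Finsupp.single 1 j)
        ((X 0 : MvPolynomial (Fin 2) (ZMod p)) ^ ⌈((p ^ e : ℚ) - 1) * (2 / 5)⌉₊ *
          X 1 ^ ⌈((p ^ e : ℚ) - 1) * (2 / 3)⌉₊ *
          (X 0 + X 1) ^ ⌈((p ^ e : ℚ) - 1) * (5 / 6)⌉₊) ≠ 0 := by
  obtain ⟨hka₃, hi, hj, hdigits⟩ := hk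
  have hq : (p ^ e : ℚ) - 1 = ((p ^ e - 1 : ℕ) : ℚ) := by
    rw [Nat.cast_sub (Nat.one_le_pow _ _ hp.pos)]
    push_cast; rfl
  have hceil (a b : ℕ) (hb : 0 < b) :
      ⌈((p ^ e : ℚ) - 1) * (a / b)⌉₊ = (p ^ e - 1) * a ⌈/⌉ b := by
    rw [hq, Nat.ceil_natCast_mul_div_natCast _ _ hb]
  have ha₃ : (p ^ e - 1) * 5 ⌈/⌉ 6 < p ^ e := by
    rw [Nat.ceilDiv_eq_add_pred_div]
    have := Nat.one_le_pow e p hp.pos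
    omega
  have h₁ := hceil 2 5 (by norm_num)
  have h₂ := hceil 2 3 (by norm_num)
  have h₃ := hceil 5 6 (by norm_num)
  simp only [Nat.cast_ofNat] at h₁ h₂ h₃
  refine ⟨e, he, _, _, hi, hj, ?_⟩
  rw [h₁, h₂, h₃, coeff_X_pow_mul_X_pow_mul_add_pow _ _ hka₃, Ne, ZMod.natCast_eq_zero_iff]
  exact hp.not_dvd_choose_of_digits_le ha₃ hka₃ hdigits

/-- Proposition 3.8, Case 1: Fedder's criterion for `(ℙ¹, (2/5)P₁+(2/3)P₂+(5/6)P₃)`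
in characteristic `p > 5`. -/
theorem stmt_4 (p : ℕ) (hp : p.Prime) (h5 : 5 < p) :
    ∃ e : ℕ, 0 < e ∧ ∃ i j : ℕ, i < p ^ e - 1 ∧ j < p ^ e - 1 ∧
      MvPolynomial.coeff (Finsupp.single 0 i + Finsupp.single 1 j)
        ((X 0 : MvPolynomial (Fin 2) (ZMod p)) ^ ⌈((p ^ e : ℚ) - 1) * (2 / 5)⌉₊ *
          X 1 ^ ⌈((p ^ e : ℚ) - 1) * (2 / 3)⌉₊ *
          (X 0 + X 1) ^ ⌈((p ^ e : ℚ) - 1) * (5 / 6)⌉₊) ≠ 0 := by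
  obtain ⟨e, he, k, hk⟩ : ∃ e, 0 < e ∧ ∃ k, IsFedderWitness p e k := by
    by_cases h47 : 47 ≤ p
    · exact ⟨1, one_pos, _, isFedderWitness_one_of_le h47⟩
    · exact exists_isFedderWitness_of_lt hp h5 (by omega)
  exact exists_coeff_ne_zero_of_isFedderWitness hp he hk
end

section
/- In the polynomial ring 𝔽₂₃[x,y], the coefficient of the monomial x^491 y^513 in the polynomial x^212 · y^352 · (x+y)^440 is nonzero; moreover 491 < 23² − 1 and 513 < 23² − 1. -/
open MvPolynomial Finsupp

section

variable {R σ : Type*} [CommSemiring R] {i j : σ}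

theorem coeff_add_pow_of_ne (hij : i ≠ j) (k l : ℕ) :
    coeff (single i k + single j l) ((X i + X j : MvPolynomial σ R) ^ (k + l)) =
      (k + l).choose k := by
  classical
  have hterm : ∀ m, (X i ^ m * X j ^ (k + l - m) * ((k + l).choose m : MvPolynomial σ R)) =
      monomial (single i m + single j (k + l - m)) ((k + l).choose m : R) := by
    intro m
    rw [X_pow_eq_monomial, X_pow_eq_monomial, monomial_mul, ← map_natCast C, mul_comm,
      C_mul_monomial, mul_one, mul_one]
  have happly_i : ∀ m n, (single i m + single j n : σ →₀ ℕ) i = m := by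
    simp [hij.symm]
  rw [add_pow, coeff_sum, Finset.sum_eq_single k]
  · rw [hterm, coeff_monomial, Nat.add_sub_cancel_left, if_pos rfl]
  · intro m _ hmk
    rw [hterm, coeff_monomial, if_neg]
    intro h
    exact hmk (by simpa only [happly_i] using congrArg (· i) h)
  · intro hk
    simp at hk

theorem coeff_X_pow_mul_X_pow_mul_add_pow (hij : i ≠ j) (a b k l : ℕ) :
    coeff (single i (a + k) + single j (b + l))
      ((X i : MvPolynomial σ R) ^ a * X j ^ b * (X i + X j) ^ (k + l)) =
      ((k + l).choose k : R) := by
  have hsplit : (single i (a + k) + single j (b + l) : σ →₀ ℕ) =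
      (single i a + single j b) + (single i k + single j l) := by
    simp only [single_add]
    abel
  rw [X_pow_eq_monomial, X_pow_eq_monomial, monomial_mul, one_mul, hsplit, coeff_monomial_mul,
    one_mul, coeff_add_pow_of_ne hij]

end

theorem ZMod.natCast_choose_eq_mul_choose (p : ℕ) [Fact p.Prime] (n k : ℕ) :
    (n.choose k : ZMod p) = (n % p).choose (k % p) * (n / p).choose (k / p) := by
  exact_mod_cast (ZMod.natCast_eq_natCast_iff _ _ _).mpr
    Choose.choose_modEq_choose_mod_mul_choose_div_nat

/-- Verification in Proposition 3.8 for p = 23, e = 2. -/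
theorem stmt_16 :
    MvPolynomial.coeff (Finsupp.single 0 491 + Finsupp.single 1 513)
      ((X 0 : MvPolynomial (Fin 2) (ZMod 23)) ^ 212 * X 1 ^ 352 * (X 0 + X 1) ^ 440) ≠ 0 ∧
    (491 : ℕ) < 23 ^ 2 - 1 ∧ (513 : ℕ) < 23 ^ 2 - 1 := by
  refine ⟨?_, by norm_num, by norm_num⟩
  have hcoeff := coeff_X_pow_mul_X_pow_mul_add_pow (R := ZMod 23)
    (by decide : (0 : Fin 2) ≠ 1) 212 352 279 161
  simp only [Nat.reduceAdd] at hcoeff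
  rw [hcoeff, @ZMod.natCast_choose_eq_mul_choose 23 ⟨by norm_num⟩]
  -- Lucas: 440 = 19·23 + 3 and 279 = 12·23 + 3, and C(19, 12) = 50388 is prime to 23.
  decide
end
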